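/- arXiv:2511.20111 — 2 statements merged into one kernel-verified Lean document; each statement's English description precedes it below -/
import Mathlib

section
/- Let G = (V, E, w) be a weighted directed graph with positive real edge weights and let H ⊆ TC(G), with each edge (u, v) ∈ H weighted dist_G(u, v). Then there exists a positive weight function w' on E ∪ H such that, in the weighted graph G' = (V, E ∪ H, w'), every pair (s, t) ∈ TC(G) has a unique minimum-w'-weight s–t path, and this unique path is also a minimum-weight s–t path of the weighted graph G ∪ H that uses exactly hopdist_{G∪H}(s, t) edges. -/
open scoped Classical

abbrev Edge (n : ℕ) := Fin n × Fin n

def IsPathList {n : ℕ} (E : Set (Edge n)) (l : List (Fin n)) : Prop :=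
  l.Nodup ∧ l.Chain' (fun a b => (a, b) ∈ E)

def IsPathFromTo {n : ℕ} (E : Set (Edge n)) (u v : Fin n) (l : List (Fin n)) : Prop :=
  IsPathList E l ∧ l.head? = some u ∧ l.getLast? = some v

def TCrel {n : ℕ} (E : Set (Edge n)) (u v : Fin n) : Prop :=
  u ≠ v ∧ ∃ l : List (Fin n), IsPathFromTo E u v l

def TCset {n : ℕ} (E : Set (Edge n)) : Set (Edge n) := {p | TCrel E p.1 p.2}

/-- The total weight of a path `l` under the weight function `w`. -/
def pathWeight {n : ℕ} (w : Edge n → ℝ) (l : List (Fin n)) : ℝ :=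
  ((l.zip l.tail).map w).sum

/-- `l` is a minimum-weight directed path from `s` to `t`. -/
def IsMinWeightPath {n : ℕ} (E : Set (Edge n)) (w : Edge n → ℝ) (s t : Fin n)
    (l : List (Fin n)) : Prop :=
  IsPathFromTo E s t l ∧ ∀ l', IsPathFromTo E s t l' → pathWeight w l ≤ pathWeight w l'

/-- The weighted distance: minimum total weight of a directed `s`–`t` path. -/
noncomputable def wdist {n : ℕ} (E : Set (Edge n)) (w : Edge n → ℝ) (s t : Fin n) : ℝ :=
  sInf {r : ℝ | ∃ l, IsPathFromTo E s t l ∧ pathWeight w l = r}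

/-- `hopdist E w s t`: the minimum number of edges among all minimum-weight `s`–`t` paths. -/
noncomputable def hopdist {n : ℕ} (E : Set (Edge n)) (w : Edge n → ℝ) (s t : Fin n) : ℕ :=
  sInf {k : ℕ | ∃ l, IsMinWeightPath E w s t l ∧ l.length = k + 1}

/-- The weight function of `G ∪ H`: each hopset edge `(u,v) ∈ H` is weighted `dist_G(u,v)`;
all other edges keep their original weight. -/
noncomputable def unionWeight {n : ℕ} (E : Set (Edge n)) (w : Edge n → ℝ) (H : Set (Edge n)) :
    Edge n → ℝ :=
  fun e => if e ∈ H then wdist E w e.1 e.2 else w e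

/-- `H ⊆ TC(G)` is an exact hopset with hopbound `β` for the weighted graph `(E, w)`. -/
def IsExactHopset {n : ℕ} (E : Set (Edge n)) (w : Edge n → ℝ) (H : Set (Edge n)) (β : ℕ) :
    Prop :=
  H ⊆ TCset E ∧ ∀ p ∈ TCset E, hopdist (E ∪ H) (unionWeight E w H) p.1 p.2 ≤ β

/-- `exopt N M β`: the least `h` such that every weighted directed graph with at most `N`
vertices, at most `M` edges and positive real edge weights admits an exact hopset of size
at most `h` with hopbound at most `β`. -/
noncomputable def exopt (N M β : ℕ) : ℕ :=
  sInf {h : ℕ | ∀ n' : ℕ, n' ≤ N → ∀ (E : Set (Edge n')) (w : Edge n' → ℝ),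
    E.ncard ≤ M → (∀ e ∈ E, 0 < w e) →
    ∃ H : Set (Edge n'), H.ncard ≤ h ∧ IsExactHopset E w H β}

/-- The (weighted) potential `φ(H)`: the sum of `hopdist_{G∪H}(s,t)` over all pairs `(s,t)`
in the transitive closure of `G` with `hopdist_{G∪H}(s,t) ≥ β`. -/
noncomputable def wpotential {n : ℕ} (E : Set (Edge n)) (w : Edge n → ℝ) (H : Set (Edge n))
    (β : ℕ) : ℕ :=
  ∑ p : Edge n,
    if TCrel E p.1 p.2 ∧ β ≤ hopdist (E ∪ H) (unionWeight E w H) p.1 p.2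
    then hopdist (E ∪ H) (unionWeight E w H) p.1 p.2 else 0

/-- `Δ((u,v) | H) = φ(H) - φ(H ∪ {(u,v)})` for the weighted potential. -/
noncomputable def wdelta {n : ℕ} (E : Set (Edge n)) (w : Edge n → ℝ) (H : Set (Edge n))
    (β : ℕ) (e : Edge n) : ℕ :=
  wpotential E w H β - wpotential E w (H ∪ {e}) β

/-!
Write `W` for the weights of `G ∪ H` and code the edges injectively by `c`. The new weights are
`W e + δ (1 + δ' 2 ^ c e)` with small `δ, δ' > 0`. As there are finitely many simple paths, a small
`δ` makes the new order on paths lexicographic in (`W`-weight, `hops + δ' Σ 2 ^ c e`), and a small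
`δ'` makes the latter lexicographic in (hop count, `Σ 2 ^ c e`). The binary sum determines the edge
set of a simple path, hence the path itself given its start. So the new shortest path is unique,
`W`-shortest, and hop-minimal among the `W`-shortest paths.
-/

open Filter Topology

namespace List

variable {α : Type*}

theorem consecutivePairs_cons_cons (a b : α) (l : List α) :
    (a :: b :: l).consecutivePairs = (a, b) :: (b :: l).consecutivePairs :=
  rfl

theorem fst_mem_of_mem_consecutivePairs {l : List α} {p : α × α}
    (hp : p ∈ l.consecutivePairs) : p.1 ∈ l :=
  (of_mem_zip hp).1

theorem rel_of_mem_consecutivePairs {R : α → α → Prop} :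
    ∀ {l : List α}, l.IsChain R → ∀ {p : α × α}, p ∈ l.consecutivePairs → R p.1 p.2
  | [], _, _, hp | [_], _, _, hp => by simp [consecutivePairs] at hp
  | a :: b :: l, hl, p, hp => by
    rw [isChain_cons_cons] at hl
    rcases mem_cons.mp hp with rfl | hp
    · exact hl.1
    · exact rel_of_mem_consecutivePairs hl.2 hp

theorem Nodup.consecutivePairs : ∀ {l : List α}, l.Nodup → l.consecutivePairs.Nodup
  | [], _ | [_], _ => by simp [List.consecutivePairs]
  | a :: b :: l, hl => by
    rw [consecutivePairs_cons_cons, nodup_cons]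
    exact ⟨fun h ↦ (nodup_cons.mp hl).1 (fst_mem_of_mem_consecutivePairs h),
      (nodup_cons.mp hl).2.consecutivePairs⟩

theorem mem_consecutivePairs_iff_of_nodup_cons {a b : α} {l : List α}
    (hl : (a :: b :: l).Nodup) {p : α × α} :
    p ∈ (b :: l).consecutivePairs ↔ p ∈ (a :: b :: l).consecutivePairs ∧ p.1 ≠ a := by
  rw [consecutivePairs_cons_cons, mem_cons]
  constructor
  · intro hp
    exact ⟨.inr hp, fun h ↦ (nodup_cons.mp hl).1 (h ▸ fst_mem_of_mem_consecutivePairs hp)⟩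
  · rintro ⟨rfl | hp, hne⟩
    · exact absurd rfl hne
    · exact hp

theorem eq_of_head?_eq_of_consecutivePairs_eq :
    ∀ {l₁ l₂ : List α}, l₁.Nodup → l₂.Nodup → l₁.head? = l₂.head? →
      (∀ p, p ∈ l₁.consecutivePairs ↔ p ∈ l₂.consecutivePairs) → l₁ = l₂
  | [], [], _, _, _, _ => rfl
  | [_], [_], _, _, hh, _ => by simpa using hh
  | [], _ :: _, _, _, hh, _ | _ :: _, [], _, _, hh, _ => by simp at hh
  | [_], b :: c :: _, _, _, _, hp => by
    simpa [consecutivePairs] using (hp (b, c)).2 (mem_cons_self ..)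
  | a :: b :: _, [_], _, _, _, hp => by
    simpa [consecutivePairs] using (hp (a, b)).1 (mem_cons_self ..)
  | a :: b :: l₁, a' :: b' :: l₂, h₁, h₂, hh, hp => by
    obtain rfl : a = a' := by simpa using hh
    obtain rfl : b = b' := by
      rcases mem_cons.mp ((hp (a, b)).1 (mem_cons_self ..)) with h | h
      · exact (Prod.ext_iff.mp h).2
      · exact absurd (fst_mem_of_mem_consecutivePairs h) (nodup_cons.mp h₂).1
    rw [eq_of_head?_eq_of_consecutivePairs_eq (nodup_cons.mp h₁).2 (nodup_cons.mp h₂).2 rfl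
      fun p ↦ by rw [mem_consecutivePairs_iff_of_nodup_cons h₁,
        mem_consecutivePairs_iff_of_nodup_cons h₂, hp]]

theorem finite_setOf_nodup [Fintype α] : Set.Finite {l : List α | l.Nodup} :=
  (finite_length_le α (Fintype.card α)).subset fun _ hl ↦ Nodup.length_le_card hl

end List

section LexPerturbation

variable {ι : Type*} {s : Set ι}

theorem eventually_add_mul_lt_add_mul (hs : s.Finite) (f g : ι → ℝ) :
    ∀ᶠ δ in 𝓝[>] 0, ∀ x ∈ s, ∀ y ∈ s, f x < f y → f x + δ * g x < f y + δ * g y := by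
  have hlim : ∀ x, Tendsto (fun δ : ℝ ↦ f x + δ * g x) (𝓝[>] 0) (𝓝 (f x)) := fun x ↦
    ((continuous_const.add (continuous_id.mul continuous_const)).tendsto' 0 (f x)
      (by simp)).mono_left nhdsWithin_le_nhds
  simp only [hs.eventually_all, eventually_imp_distrib_left]
  exact fun x _ y _ hlt ↦ (hlim x).eventually_lt (hlim y) hlt

theorem exists_pos_add_mul_le_iff_toLex_le (hs : s.Finite) (f g : ι → ℝ) :
    ∃ δ > 0, ∀ x ∈ s, ∀ y ∈ s,
      f x + δ * g x ≤ f y + δ * g y ↔ toLex (f x, g x) ≤ toLex (f y, g y) := by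
  obtain ⟨δ, hlt, hδ⟩ := ((eventually_add_mul_lt_add_mul hs f g).and self_mem_nhdsWithin).exists
  refine ⟨δ, hδ, fun x hx y hy ↦ ?_⟩
  simp only [Prod.Lex.toLex_le_toLex]
  constructor
  · intro hle
    rcases lt_trichotomy (f x) (f y) with h | h | h
    · exact .inl h
    · exact .inr ⟨h, le_of_mul_le_mul_left (by linarith) (Set.mem_Ioi.mp hδ)⟩
    · exact absurd hle (not_le.mpr (hlt y hy x hx h))
  · rintro (h | ⟨h, hg⟩)
    · exact (hlt x hx y hy h).le
    · rw [h]
      gcongr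

end LexPerturbation

section Paths

variable {n : ℕ}

theorem IsPathFromTo.mono {E E' : Set (Edge n)} (hE : E ⊆ E') {s t : Fin n} {l : List (Fin n)}
    (hl : IsPathFromTo E s t l) : IsPathFromTo E' s t l :=
  ⟨⟨hl.1.1, hl.1.2.imp fun _ _ h ↦ hE h⟩, hl.2⟩

theorem finite_setOf_isPathFromTo (E : Set (Edge n)) (s t : Fin n) :
    Set.Finite {l | IsPathFromTo E s t l} :=
  List.finite_setOf_nodup.subset fun _ hl ↦ hl.1.1

theorem pathWeight_add_mul (w ρ : Edge n → ℝ) (δ : ℝ) (l : List (Fin n)) :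
    pathWeight (fun e ↦ w e + δ * ρ e) l = pathWeight w l + δ * pathWeight ρ l := by
  simp only [pathWeight, List.sum_map_add, List.sum_map_mul_left]

theorem pathWeight_one (l : List (Fin n)) : pathWeight (fun _ ↦ 1) l = (l.length - 1 : ℕ) := by
  simp [pathWeight]

theorem pathWeight_nonneg {E : Set (Edge n)} {w : Edge n → ℝ} (hw : ∀ e ∈ E, 0 ≤ w e)
    {l : List (Fin n)} (hl : IsPathList E l) : 0 ≤ pathWeight w l :=
  List.sum_nonneg fun _ hx ↦ by
    obtain ⟨e, he, rfl⟩ := List.mem_map.mp hx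
    exact hw e (List.rel_of_mem_consecutivePairs hl.2 he)

theorem wdist_nonneg {E : Set (Edge n)} {w : Edge n → ℝ} (hw : ∀ e ∈ E, 0 ≤ w e) (s t : Fin n) :
    0 ≤ wdist E w s t :=
  Real.sInf_nonneg <| by
    rintro _ ⟨l, hl, rfl⟩
    exact pathWeight_nonneg hw hl.1

theorem unionWeight_nonneg {E H : Set (Edge n)} {w : Edge n → ℝ} (hw : ∀ e ∈ E, 0 ≤ w e)
    {e : Edge n} (he : e ∈ E ∪ H) : 0 ≤ unionWeight E w H e := by
  unfold unionWeight
  split_ifs with heH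
  · exact wdist_nonneg hw _ _
  · exact hw e (he.resolve_right heH)

theorem length_eq_hopdist_add_one {E : Set (Edge n)} {w : Edge n → ℝ} {s t : Fin n}
    {l : List (Fin n)} (hl : IsMinWeightPath E w s t l)
    (hmin : ∀ l', IsMinWeightPath E w s t l' → l.length ≤ l'.length) :
    l.length = hopdist E w s t + 1 := by
  have hpos : 0 < l.length :=
    List.length_pos_iff.mpr fun h ↦ by simp [h, IsMinWeightPath, IsPathFromTo] at hl
  have hmem : l.length - 1 ∈ {k | ∃ l', IsMinWeightPath E w s t l' ∧ l'.length = k + 1} :=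
    ⟨l, hl, by omega⟩
  have hle : l.length - 1 ≤ hopdist E w s t :=
    le_csInf ⟨_, hmem⟩ fun k ⟨l', hl', hk⟩ ↦ by have := hmin l' hl'; omega
  have hge : hopdist E w s t ≤ l.length - 1 := Nat.sInf_le hmem
  omega

theorem eq_of_pathWeight_two_pow_encode_eq {l₁ l₂ : List (Fin n)} (h₁ : l₁.Nodup)
    (h₂ : l₂.Nodup) (hhead : l₁.head? = l₂.head?)
    (h : pathWeight (fun e ↦ (2 : ℝ) ^ Encodable.encode e) l₁ =
      pathWeight (fun e ↦ (2 : ℝ) ^ Encodable.encode e) l₂) : l₁ = l₂ := by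
  have hsum : ∀ l : List (Fin n), l.Nodup →
      pathWeight (fun e ↦ (2 : ℝ) ^ Encodable.encode e) l =
        ((∑ k ∈ l.consecutivePairs.toFinset.image Encodable.encode, 2 ^ k : ℕ) : ℝ) :=
    fun l hl ↦ by
      rw [Finset.sum_image Encodable.encode_injective.injOn, Nat.cast_sum,
        List.sum_toFinset _ hl.consecutivePairs]
      push_cast
      rfl
  rw [hsum l₁ h₁, hsum l₂ h₂, Nat.cast_inj] at h
  have hpairs :=
    Finset.image_injective Encodable.encode_injective (Finset.geomSum_injective le_rfl h)
  exact List.eq_of_head?_eq_of_consecutivePairs_eq h₁ h₂ hhead fun p ↦ by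
    rw [← List.mem_toFinset, hpairs, List.mem_toFinset]

end Paths

theorem exists_tieBreak_weight (n : ℕ) :
    ∃ ρ : Edge n → ℝ, (∀ e, 0 < ρ e) ∧ ∀ x y : List (Fin n), x.Nodup → y.Nodup →
      x.head? = y.head? →
        (pathWeight ρ x ≤ pathWeight ρ y → x.length ≤ y.length) ∧
        (pathWeight ρ x = pathWeight ρ y → x = y) := by
  obtain ⟨δ, hδ, hlex⟩ := exists_pos_add_mul_le_iff_toLex_le List.finite_setOf_nodup
    (pathWeight fun _ ↦ 1) (pathWeight fun e : Edge n ↦ (2 : ℝ) ^ Encodable.encode e)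
  refine ⟨fun e ↦ 1 + δ * 2 ^ Encodable.encode e, fun e ↦ by positivity,
    fun x y hx hy hxy ↦ ⟨fun hle ↦ ?_, fun heq ↦ ?_⟩⟩
  · rw [pathWeight_add_mul, pathWeight_add_mul, hlex x hx y hy,
      Prod.Lex.toLex_le_toLex'] at hle
    have hhops := hle.1
    rw [pathWeight_one, pathWeight_one, Nat.cast_le] at hhops
    cases x <;> cases y <;> simp_all
  · rw [pathWeight_add_mul, pathWeight_add_mul] at heq
    have hcode := toLex_inj.mp <|
      le_antisymm ((hlex x hx y hy).1 heq.le) ((hlex y hy x hx).1 heq.ge)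
    exact eq_of_pathWeight_two_pow_encode_eq hx hy hxy (Prod.ext_iff.mp hcode).2

theorem exists_unique_isMinWeightPath_of_lex {n : ℕ} {E : Set (Edge n)} {W ρ w' : Edge n → ℝ}
    (hρ : ∀ x y : List (Fin n), x.Nodup → y.Nodup → x.head? = y.head? →
      (pathWeight ρ x ≤ pathWeight ρ y → x.length ≤ y.length) ∧
      (pathWeight ρ x = pathWeight ρ y → x = y))
    (hw' : ∀ x y : List (Fin n), x.Nodup → y.Nodup →
      (pathWeight w' x ≤ pathWeight w' y ↔
        toLex (pathWeight W x, pathWeight ρ x) ≤ toLex (pathWeight W y, pathWeight ρ y)))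
    {s t : Fin n} (hst : ∃ l, IsPathFromTo E s t l) :
    ∃ l, IsMinWeightPath E w' s t l ∧ (∀ l', IsMinWeightPath E w' s t l' → l' = l) ∧
      IsMinWeightPath E W s t l ∧ l.length = hopdist E W s t + 1 := by
  obtain ⟨l, hl, hmin⟩ :=
    Set.exists_min_image _ (pathWeight w') (finite_setOf_isPathFromTo E s t) hst
  have hlex : ∀ l', IsPathFromTo E s t l' →
      toLex (pathWeight W l, pathWeight ρ l) ≤ toLex (pathWeight W l', pathWeight ρ l') :=
    fun l' hl' ↦ (hw' l l' hl.1.1 hl'.1.1).1 (hmin l' hl')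
  have hWmin : IsMinWeightPath E W s t l :=
    ⟨hl, fun l' hl' ↦ (Prod.Lex.toLex_le_toLex'.1 (hlex l' hl')).1⟩
  have hhead : ∀ {l'}, IsPathFromTo E s t l' → l'.head? = l.head? :=
    fun hl' ↦ hl'.2.1.trans hl.2.1.symm
  refine ⟨l, ⟨hl, hmin⟩, fun l' hl' ↦ ?_, hWmin,
    length_eq_hopdist_add_one hWmin fun l' hl' ↦ ?_⟩
  · have heq := le_antisymm ((hw' l' l hl'.1.1.1 hl.1.1).1 (hl'.2 l hl)) (hlex l' hl'.1)
    exact (hρ l' l hl'.1.1.1 hl.1.1 (hhead hl'.1)).2 (Prod.ext_iff.mp (toLex_inj.mp heq)).2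
  · have hW : pathWeight W l = pathWeight W l' := le_antisymm (hWmin.2 l' hl'.1) (hl'.2 l hl)
    exact (hρ l l' hl.1.1 hl'.1.1.1 (hhead hl'.1).symm).1
      ((Prod.Lex.toLex_le_toLex'.1 (hlex l' hl'.1)).2 hW)

/-- **perturbation.** Let `G = (V, E, w)` be a weighted directed graph with
positive real edge weights and `H ⊆ TC(G)` (each edge `(u,v) ∈ H` weighted
`dist_G(u,v)`). Then there is a positive weight function `w'` on `E ∪ H` such that in
`G' = (V, E ∪ H, w')` every pair `(s,t) ∈ TC(G)` has a unique minimum-`w'`-weight `s`–`t`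
path, and this unique path is also a minimum-weight `s`–`t` path of `G ∪ H` using exactly
`hopdist_{G∪H}(s,t)` edges. -/
theorem perturbation_unique_shortest_paths :
    ∀ (n : ℕ) (E : Set (Edge n)) (w : Edge n → ℝ), (∀ e ∈ E, 0 < w e) →
      ∀ H : Set (Edge n), H ⊆ TCset E →
        ∃ w' : Edge n → ℝ, (∀ e ∈ E ∪ H, 0 < w' e) ∧
          ∀ p ∈ TCset E, ∃ l : List (Fin n),
            IsMinWeightPath (E ∪ H) w' p.1 p.2 l ∧
            (∀ l' : List (Fin n), IsMinWeightPath (E ∪ H) w' p.1 p.2 l' → l' = l) ∧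
            IsMinWeightPath (E ∪ H) (unionWeight E w H) p.1 p.2 l ∧
            l.length = hopdist (E ∪ H) (unionWeight E w H) p.1 p.2 + 1 := by
  intro n E w hw H _
  obtain ⟨ρ, hρpos, hρ⟩ := exists_tieBreak_weight n
  obtain ⟨δ, hδ, hlex⟩ := exists_pos_add_mul_le_iff_toLex_le List.finite_setOf_nodup
    (pathWeight (unionWeight E w H)) (pathWeight ρ)
  refine ⟨fun e ↦ unionWeight E w H e + δ * ρ e, fun e he ↦ ?_, ?_⟩
  · exact add_pos_of_nonneg_of_pos (unionWeight_nonneg (fun e he ↦ (hw e he).le) he)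
      (mul_pos hδ (hρpos e))
  rintro ⟨s, t⟩ ⟨-, l, hl⟩
  refine exists_unique_isMinWeightPath_of_lex hρ (fun x y hx hy ↦ ?_)
    ⟨l, hl.mono Set.subset_union_left⟩
  rw [pathWeight_add_mul, pathWeight_add_mul]
  exact hlex x hx y hy
end

section
/- There is an absolute constant C > 0 such that for every directed graph G on n vertices and every integer β ≥ 1, there exists a shortcut set H ⊆ TC(G) with hopbound β and size |H| ≤ C · n²/β². -/
/-!
Let `s = ⌊β / 8⌋` and call a pair far when its distance exceeds `2s`. As long as some reachable
pair is at distance more than `β`, take a shortest walk `f` between them, of length `L > β`, and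
add shortcuts between all pairs of the vertices `f (a * s)`. This costs at most `(L / s + 1)²`,
i.e. `O(L² / β²)`, edges. Afterwards every pair `(f i, f j)` with `i < L / 4` and `j > L - L / 4`
is at distance at most `2s`, while before it was far because subwalks of a shortest walk are
shortest. So `(L / 4)²` far pairs disappear for every `O(L² / β²)` edges added, and at most `n²`
pairs are far initially. For `β < 64` the whole transitive closure is a shortcut set.
-/

open scoped Classical

/-- `hdist E u v` is the minimum number of edges on a directed path from `u` to `v`
(`⊤` if no such path exists). -/
noncomputable def hdist {n : ℕ} (E : Set (Edge n)) (u v : Fin n) : ℕ∞ :=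
  sInf {k : ℕ∞ | ∃ l : List (Fin n), IsPathFromTo E u v l ∧ (l.length : ℕ∞) = k + 1}

/-- `H` is a shortcut set with hopbound `β` for the graph with edge set `E`. -/
def IsShortcutSet {n : ℕ} (E H : Set (Edge n)) (β : ℕ) : Prop :=
  H ⊆ TCset E ∧ ∀ p ∈ TCset E, hdist (E ∪ H) p.1 p.2 ≤ (β : ℕ∞)

section Walks

variable {n : ℕ} {E E' : Set (Edge n)} {f : ℕ → Fin n} {u v w : Fin n} {a b i j k m : ℕ}

/-- A walk with `m` edges, encoded by its vertex sequence; only `f 0, …, f m` matter. -/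
def IsWalk (E : Set (Edge n)) (f : ℕ → Fin n) (m : ℕ) : Prop :=
  ∀ i < m, (f i, f (i + 1)) ∈ E

def HasWalk (E : Set (Edge n)) (u v : Fin n) (m : ℕ) : Prop :=
  ∃ f, IsWalk E f m ∧ f 0 = u ∧ f m = v

lemma IsWalk.mono (hE : E ⊆ E') (hf : IsWalk E f m) : IsWalk E' f m :=
  fun i hi => hE (hf i hi)

lemma HasWalk.mono (hE : E ⊆ E') : HasWalk E u v m → HasWalk E' u v m :=
  fun ⟨f, hf, h0, hm⟩ => ⟨f, hf.mono hE, h0, hm⟩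

lemma HasWalk.refl (u : Fin n) : HasWalk E u u 0 :=
  ⟨fun _ => u, fun _ h => absurd h (Nat.not_lt_zero _), rfl, rfl⟩

lemma HasWalk.of_mem (h : (u, v) ∈ E) : HasWalk E u v 1 :=
  ⟨fun i => if i = 0 then u else v, fun i hi => by
    obtain rfl : i = 0 := by omega
    simpa using h, rfl, rfl⟩

lemma HasWalk.trans : HasWalk E u v a → HasWalk E v w b → HasWalk E u w (a + b) := by
  rintro ⟨f, hf, rfl, rfl⟩ ⟨g, hg, hg0, rfl⟩
  refine ⟨fun t => if t ≤ a then f t else g (t - a), fun i hi => ?_, by simp, ?_⟩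
  · rcases lt_trichotomy i a with hia | rfl | hia
    · simpa [hia.le, Nat.succ_le_of_lt hia] using hf i hia
    · simpa [hg0] using hg 0 (by omega)
    · have := hg (i - a) (by omega)
      simpa [hia.not_ge, show ¬ i + 1 ≤ a by omega, show i + 1 - a = i - a + 1 by omega]
        using this
  · rcases Nat.eq_zero_or_pos b with rfl | hb
    · simp [hg0]
    · simp [show ¬ a + b ≤ a by omega]

lemma IsWalk.hasWalk (hf : IsWalk E f m) (hij : i ≤ j) (hjm : j ≤ m) :
    HasWalk E (f i) (f j) (j - i) :=
  ⟨fun t => f (i + t), fun t ht => by simpa [Nat.add_assoc] using hf (i + t) (by omega),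
    by simp, by simp [Nat.add_sub_cancel' hij]⟩

lemma IsWalk.sub_le_of_hasWalk (hf : IsWalk E f m)
    (hmin : ∀ k, HasWalk E (f 0) (f m) k → m ≤ k) (hij : i ≤ j) (hjm : j ≤ m)
    (h : HasWalk E (f i) (f j) k) : j - i ≤ k := by
  have := hmin _ (((hf.hasWalk (Nat.zero_le i) (hij.trans hjm)).trans h).trans
    (hf.hasWalk hjm le_rfl))
  omega

lemma IsWalk.injOn_of_shortest (hf : IsWalk E f m)
    (hmin : ∀ k, HasWalk E (f 0) (f m) k → m ≤ k) : Set.InjOn f (Set.Iic m) := by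
  intro i hi j hj hij
  wlog h : i ≤ j generalizing i j
  · exact (this hj hi hij.symm (le_of_not_ge h)).symm
  have := hf.sub_le_of_hasWalk hmin h hj (k := 0) (hij ▸ HasWalk.refl (f i))
  omega

lemma HasWalk.exists_shortest (h : HasWalk E u v m) :
    ∃ L f, IsWalk E f L ∧ f 0 = u ∧ f L = v ∧ ∀ k, HasWalk E u v k → L ≤ k := by
  have hex : ∃ L, HasWalk E u v L := ⟨m, h⟩
  obtain ⟨f, hf, rfl, hL⟩ := Nat.find_spec hex
  exact ⟨_, f, hf, rfl, hL, fun k hk => Nat.find_min' hex (hL ▸ hk)⟩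

lemma IsPathFromTo.length_pos {l : List (Fin n)} (h : IsPathFromTo E u v l) : 0 < l.length :=
  List.length_pos_iff.2 (by rintro rfl; simp [IsPathFromTo] at h)

lemma IsPathFromTo.hasWalk {l : List (Fin n)} (h : IsPathFromTo E u v l) :
    HasWalk E u v (l.length - 1) := by
  have hl := h.length_pos
  obtain ⟨⟨-, hc⟩, hu, hv⟩ := h
  refine ⟨fun i => l.getD i u, fun i hi => ?_, ?_, ?_⟩
  · dsimp only
    rw [List.getD_eq_getElem _ _ (by omega), List.getD_eq_getElem _ _ (by omega)]
    exact List.isChain_iff_getElem.1 hc i (by omega)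
  · simp_all [List.head?_eq_getElem?]
  · simp_all [List.getLast?_eq_getElem?]

lemma IsWalk.isPathFromTo (hf : IsWalk E f m) (hinj : Set.InjOn f (Set.Iic m)) :
    IsPathFromTo E (f 0) (f m) ((List.range (m + 1)).map f) := by
  refine ⟨⟨List.Nodup.map_on (fun x hx y hy hxy => hinj ?_ ?_ hxy) List.nodup_range, ?_⟩, ?_, ?_⟩
  · simp only [List.mem_range] at hx; exact Nat.le_of_lt_succ hx
  · simp only [List.mem_range] at hy; exact Nat.le_of_lt_succ hy
  · exact (List.isChain_map f).2 ((List.isChain_range_succ _ _).2 hf)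
  · simp [List.head?_map, List.head?_range]
  · simp [List.getLast?_map, List.getLast?_range]

lemma HasWalk.exists_isPathFromTo (h : HasWalk E u v m) :
    ∃ l, IsPathFromTo E u v l ∧ l.length ≤ m + 1 := by
  obtain ⟨L, f, hf, rfl, rfl, hmin⟩ := h.exists_shortest
  exact ⟨_, hf.isPathFromTo (hf.injOn_of_shortest hmin), by simpa using hmin m h⟩

end Walks

section Distance

variable {n : ℕ} {E E' F : Set (Edge n)} {u v : Fin n} {m : ℕ}

lemma hdist_le_iff : hdist E u v ≤ m ↔ ∃ k ≤ m, HasWalk E u v k := by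
  refine ⟨fun h => ?_, fun ⟨k, hk, hw⟩ => ?_⟩
  · by_contra! hno
    have : ((m + 1 : ℕ) : ℕ∞) ≤ hdist E u v := by
      refine le_sInf fun d ⟨l, hl, hlen⟩ => ?_
      induction d using ENat.recTopCoe with
      | top => simp at hlen
      | coe d =>
        norm_cast at hlen ⊢
        have : ¬ l.length - 1 ≤ m := fun h => hno _ h hl.hasWalk
        omega
    exact absurd (this.trans h) (by norm_cast; omega)
  · obtain ⟨l, hl, hlen⟩ := hw.exists_isPathFromTo
    have hpos := hl.length_pos
    calc hdist E u v ≤ ((l.length - 1 : ℕ) : ℕ∞) := sInf_le ⟨l, hl, by norm_cast; omega⟩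
      _ ≤ m := by norm_cast; omega

lemma hdist_anti (hE : E ⊆ E') : hdist E' u v ≤ hdist E u v :=
  sInf_le_sInf fun _ ⟨l, ⟨⟨hnd, hc⟩, hu, hv⟩, hlen⟩ =>
    ⟨l, ⟨⟨hnd, hc.imp fun _ _ h => hE h⟩, hu, hv⟩, hlen⟩

lemma mem_TCset_iff {p : Edge n} : p ∈ TCset E ↔ p.1 ≠ p.2 ∧ ∃ m, HasWalk E p.1 p.2 m :=
  and_congr_right fun _ => ⟨fun ⟨_, hl⟩ => ⟨_, hl.hasWalk⟩,
    fun ⟨_, hw⟩ => (hw.exists_isPathFromTo).imp fun _ h => h.1⟩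

lemma exists_hasWalk_of_isWalk_union (hF : F ⊆ TCset E) {f : ℕ → Fin n}
    (hf : IsWalk (E ∪ F) f m) : ∃ k, HasWalk E (f 0) (f m) k := by
  induction m with
  | zero => exact ⟨0, .refl _⟩
  | succ m ih =>
    obtain ⟨k, hk⟩ := ih fun i hi => hf i (by omega)
    obtain ⟨k', hk'⟩ : ∃ k', HasWalk E (f m) (f (m + 1)) k' := by
      rcases hf m (by omega) with h | h
      · exact ⟨1, .of_mem h⟩
      · exact (mem_TCset_iff.1 (hF h)).2
    exact ⟨_, hk.trans hk'⟩

lemma TCset_union_of_subset (hF : F ⊆ TCset E) : TCset (E ∪ F) = TCset E := by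
  ext p
  simp only [mem_TCset_iff]
  refine and_congr_right fun _ => ⟨fun ⟨_, f, hf, h0, hm⟩ => ?_,
    fun ⟨k, hk⟩ => ⟨k, hk.mono Set.subset_union_left⟩⟩
  exact h0 ▸ hm ▸ exists_hasWalk_of_isWalk_union hF hf

lemma IsShortcutSet.of_union {H : Set (Edge n)} {β : ℕ} (hF : F ⊆ TCset E)
    (hH : IsShortcutSet (E ∪ F) H β) : IsShortcutSet E (F ∪ H) β := by
  rw [IsShortcutSet, ← TCset_union_of_subset hF, ← Set.union_assoc]
  exact ⟨Set.union_subset (TCset_union_of_subset hF ▸ hF) hH.1, hH.2⟩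

lemma isShortcutSet_TCset {β : ℕ} (hβ : 1 ≤ β) : IsShortcutSet E (TCset E) β :=
  ⟨subset_rfl, fun _ hp => hdist_le_iff.2 ⟨1, hβ, .of_mem (Or.inr hp)⟩⟩

end Distance

section Shortcuts

variable {n : ℕ} {E : Set (Edge n)} {f : ℕ → Fin n} {s q L i j : ℕ}

def pathShortcuts (f : ℕ → Fin n) (s q : ℕ) : Set (Edge n) :=
  (fun ab : ℕ × ℕ => (f (ab.1 * s), f (ab.2 * s))) '' {ab | ab.1 < ab.2 ∧ ab.2 ≤ q}

lemma ncard_pathShortcuts_le : (pathShortcuts f s q).ncard ≤ (q + 1) ^ 2 := by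
  have hsub : {ab : ℕ × ℕ | ab.1 < ab.2 ∧ ab.2 ≤ q} ⊆
      ↑(Finset.range (q + 1) ×ˢ Finset.range (q + 1)) := by
    rintro ⟨a, b⟩ ⟨hab, hb⟩
    simp only [Finset.coe_product, Finset.coe_range, Set.mem_prod, Set.mem_Iio]
    omega
  calc (pathShortcuts f s q).ncard ≤ {ab : ℕ × ℕ | ab.1 < ab.2 ∧ ab.2 ≤ q}.ncard :=
        Set.ncard_image_le ((Finset.finite_toSet _).subset hsub)
    _ ≤ (Finset.range (q + 1) ×ˢ Finset.range (q + 1)).card := by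
        rw [← Set.ncard_coe_finset]; exact Set.ncard_le_ncard hsub
    _ = (q + 1) ^ 2 := by simp [sq]

lemma pathShortcuts_subset_TCset (hf : IsWalk E f L) (hinj : Set.InjOn f (Set.Iic L))
    (hs : 0 < s) : pathShortcuts f s (L / s) ⊆ TCset E := by
  rintro _ ⟨⟨a, b⟩, ⟨hab, hb⟩, rfl⟩
  have hbL : b * s ≤ L := (Nat.le_div_iff_mul_le hs).1 hb
  have has : a * s < b * s := Nat.mul_lt_mul_of_pos_right hab hs
  refine mem_TCset_iff.2 ⟨fun h => has.ne (hinj ?_ ?_ h), _, hf.hasWalk has.le hbL⟩ <;>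
    simp only [Set.mem_Iic] <;> omega

lemma hdist_union_pathShortcuts_le (hf : IsWalk E f L) (hs : 0 < s) (hij : i + 2 * s ≤ j)
    (hjL : j ≤ L) : hdist (E ∪ pathShortcuts f s (L / s)) (f i) (f j) ≤ (2 * s : ℕ) := by
  set a := i / s + 1
  set b := j / s
  have ha : i < a * s ∧ a * s ≤ i + s := by
    have := Nat.lt_div_mul_add (a := i) hs
    have := Nat.div_mul_le_self i s
    simp only [a, add_mul, one_mul]
    omega
  have hb : b * s ≤ j ∧ j < b * s + s := ⟨Nat.div_mul_le_self j s, Nat.lt_div_mul_add hs⟩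
  have hab : a < b := Nat.lt_of_mul_lt_mul_right (by omega : a * s < b * s)
  have hshort : (f (a * s), f (b * s)) ∈ E ∪ pathShortcuts f s (L / s) :=
    Or.inr ⟨(a, b), ⟨hab, Nat.div_le_div_right hjL⟩, rfl⟩
  have hf' := hf.mono (Set.subset_union_left (t := pathShortcuts f s (L / s)))
  exact hdist_le_iff.2 ⟨_, by omega,
    ((hf'.hasWalk ha.1.le (by omega)).trans (.of_mem hshort)).trans (hf'.hasWalk hb.1 hjL)⟩

end Shortcuts

section FarPairs

variable {n : ℕ} {E E' : Set (Edge n)} {f : ℕ → Fin n} {L β : ℕ}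

def farPairs (E : Set (Edge n)) (T : ℕ) : Set (Edge n) := {p | (T : ℕ∞) < hdist E p.1 p.2}

lemma farPairs_anti (hE : E ⊆ E') (T : ℕ) : farPairs E' T ⊆ farPairs E T :=
  fun _ hp => hp.trans_le (hdist_anti hE)

lemma ncard_image_rectangle (hinj : Set.InjOn f (Set.Iic L)) {k : ℕ} (hk : k ≤ L) :
    ((fun ij : ℕ × ℕ => (f ij.1, f ij.2)) ''
      ↑(Finset.range k ×ˢ Finset.Ioc (L - k) L)).ncard = k ^ 2 := by
  rw [Set.InjOn.ncard_image, Set.ncard_coe_finset, Finset.card_product, Finset.card_range,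
    Nat.card_Ioc, Nat.sub_sub_self hk, sq]
  rintro ⟨i, j⟩ hij ⟨i', j'⟩ hij' h
  simp only [Finset.coe_product, Finset.coe_range, Finset.coe_Ioc, Set.mem_prod, Set.mem_Iio,
    Set.mem_Ioc, Prod.mk.injEq] at hij hij' h ⊢
  exact ⟨hinj (Set.mem_Iic.2 (by omega)) (Set.mem_Iic.2 (by omega)) h.1,
    hinj (Set.mem_Iic.2 (by omega)) (Set.mem_Iic.2 (by omega)) h.2⟩

lemma exists_shortcuts_of_shortest_walk (hβ : 64 ≤ β) (hf : IsWalk E f L)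
    (hmin : ∀ k, HasWalk E (f 0) (f L) k → L ≤ k) (hL : β < L) :
    ∃ F ⊆ TCset E, ∃ k, 0 < k ∧ β ^ 2 * F.ncard ≤ 4096 * k ^ 2 ∧
      (farPairs (E ∪ F) (2 * (β / 8))).ncard + k ^ 2 ≤ (farPairs E (2 * (β / 8))).ncard := by
  set s := β / 8
  set k := L / 4
  set F := pathShortcuts f s (L / s)
  have hs : 0 < s := by omega
  have hinj := hf.injOn_of_shortest hmin
  set D := (fun ij : ℕ × ℕ => (f ij.1, f ij.2)) '' ↑(Finset.range k ×ˢ Finset.Ioc (L - k) L)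
  have hD : ∀ p ∈ D, ∃ i j, p = (f i, f j) ∧ i + 2 * s < j ∧ j ≤ L := by
    rintro _ ⟨⟨i, j⟩, hij, rfl⟩
    simp only [Finset.coe_product, Finset.coe_range, Finset.coe_Ioc, Set.mem_prod, Set.mem_Iio,
      Set.mem_Ioc] at hij
    exact ⟨i, j, rfl, by omega, hij.2.2⟩
  have hDfar : D ⊆ farPairs E (2 * s) := by
    intro p hp
    obtain ⟨i, j, rfl, hij, hjL⟩ := hD p hp
    refine lt_of_not_ge (α := ℕ∞) fun h => ?_
    obtain ⟨m, hm, hw⟩ := hdist_le_iff.1 h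
    have := hf.sub_le_of_hasWalk hmin (by omega) hjL hw
    omega
  have hDnear : Disjoint (farPairs (E ∪ F) (2 * s)) D := Set.disjoint_right.2 fun p hp => by
    obtain ⟨i, j, rfl, hij, hjL⟩ := hD p hp
    exact not_lt_of_ge (hdist_union_pathShortcuts_le hf hs hij.le hjL)
  refine ⟨F, pathShortcuts_subset_TCset hf hinj hs, k, by omega, ?_, ?_⟩
  · -- `β < 9 * s` and `8 * s < L` give `(L / s + 1) * β ≤ 9 * L + 9 * s ≤ 16 * L - 48`
    have hq : (L / s + 1) * β ≤ 64 * k := by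
      have hqs := Nat.div_mul_le_self L s
      have hβs : (L / s + 1) * β ≤ (L / s + 1) * (9 * s) := Nat.mul_le_mul_left _ (by omega)
      have : (L / s + 1) * (9 * s) = 9 * (L / s * s) + 9 * s := by ring
      omega
    calc β ^ 2 * F.ncard ≤ β ^ 2 * (L / s + 1) ^ 2 :=
          Nat.mul_le_mul_left _ ncard_pathShortcuts_le
      _ = ((L / s + 1) * β) ^ 2 := by ring
      _ ≤ (64 * k) ^ 2 := Nat.pow_le_pow_left hq 2
      _ = 4096 * k ^ 2 := by ring
  · rw [← ncard_image_rectangle hinj (k := k) (by omega), ← Set.ncard_union_eq hDnear]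
    exact Set.ncard_le_ncard (Set.union_subset (farPairs_anti Set.subset_union_left _) hDfar)

end FarPairs

lemma exists_shortcutSet_of_farPairs {n β : ℕ} (hβ : 64 ≤ β) (E : Set (Edge n)) :
    ∃ H, IsShortcutSet E H β ∧
      β ^ 2 * H.ncard ≤ 4096 * (farPairs E (2 * (β / 8))).ncard := by
  induction hN : (farPairs E (2 * (β / 8))).ncard using Nat.strong_induction_on
    generalizing E with
  | _ N ih =>
  by_cases hshort : ∀ p ∈ TCset E, hdist E p.1 p.2 ≤ β
  · exact ⟨∅, ⟨Set.empty_subset _, by simpa using hshort⟩, by simp⟩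
  simp only [not_forall, not_le, exists_prop] at hshort
  obtain ⟨⟨u, v⟩, huv, hfar⟩ := hshort
  obtain ⟨L, f, hf, rfl, rfl, hmin⟩ := (mem_TCset_iff.1 huv).2.choose_spec.exists_shortest
  have hL : β < L := by
    exact_mod_cast hfar.trans_le (hdist_le_iff.2 ⟨L, le_rfl, f, hf, rfl, rfl⟩)
  obtain ⟨F, hF, k, hk, hFcard, hfarF⟩ := exists_shortcuts_of_shortest_walk hβ hf hmin hL
  obtain ⟨H, hH, hHcard⟩ := ih _ (by have := Nat.pow_pos (n := 2) hk; omega) (E ∪ F) rfl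
  refine ⟨F ∪ H, hH.of_union hF, ?_⟩
  calc β ^ 2 * (F ∪ H).ncard ≤ β ^ 2 * F.ncard + β ^ 2 * H.ncard := by
        rw [← mul_add]; exact Nat.mul_le_mul_left _ (Set.ncard_union_le F H)
    _ ≤ 4096 * N := by omega

lemma ncard_le_sq {n : ℕ} (S : Set (Edge n)) : S.ncard ≤ n ^ 2 :=
  (Set.ncard_le_ncard (Set.subset_univ S)).trans (by simp [Set.ncard_univ, sq])

lemma exists_shortcutSet_sq_mul_ncard_le {n β : ℕ} (E : Set (Edge n)) (hβ : 1 ≤ β) :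
    ∃ H, IsShortcutSet E H β ∧ β ^ 2 * H.ncard ≤ 4096 * n ^ 2 := by
  rcases lt_or_ge β 64 with hβ64 | hβ64
  · refine ⟨TCset E, isShortcutSet_TCset hβ, Nat.mul_le_mul ?_ (ncard_le_sq _)⟩
    calc β ^ 2 ≤ 64 ^ 2 := Nat.pow_le_pow_left hβ64.le 2
      _ = 4096 := by norm_num
  · obtain ⟨H, hH, hcard⟩ := exists_shortcutSet_of_farPairs hβ64 E
    exact ⟨H, hH, hcard.trans (Nat.mul_le_mul_left _ (ncard_le_sq _))⟩

/-- **folklore trade-off.** There is an absolute constant `C > 0` such that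
every directed graph on `n` vertices and every integer `β ≥ 1` admit a shortcut set
`H ⊆ TC(G)` with hopbound `β` and size `|H| ≤ C · n²/β²`. -/
theorem folklore_shortcut_tradeoff :
    ∃ C : ℝ, 0 < C ∧
      ∀ (n : ℕ) (E : Set (Edge n)) (β : ℕ), 1 ≤ β →
        ∃ H : Set (Edge n), IsShortcutSet E H β ∧
          (H.ncard : ℝ) ≤ C * (n : ℝ) ^ 2 / (β : ℝ) ^ 2 := by
  refine ⟨4096, by norm_num, fun n E β hβ => ?_⟩
  obtain ⟨H, hH, hcard⟩ := exists_shortcutSet_sq_mul_ncard_le E hβ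
  refine ⟨H, hH, ?_⟩
  rw [le_div_iff₀ (by positivity), mul_comm]
  exact_mod_cast hcard
end
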